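/- Let m ≥ 1 and set x_j := sin²(π(2j−1)/(4m)) for j = 1,…,m. Then the coefficients a_j := ((−1)^{j+1}/m) · cot(π(2j−1)/(4m)) satisfy ∑_{j=1}^m a_j · x_j^{i-1} = δ_{i,1} for every i ∈ {1,…,m}. -/

import Mathlib

/-!
Put `t_j = π (2 j + 1) / (4 m)`, so that `sin (2 m t_j) = (-1) ^ j` and the weights are
`w_j = sin (2 m t_j) cot t_j`. A product-to-sum expansion writes `w_j cos (2 k t_j)` as an
average of four Dirichlet kernels `sin ((2 r + 1) t_j) / sin t_j` with `r < 2 m`, and each of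
these sums to `m` over `j` because `∑ j, cos (2 s t_j) = 0` for `0 < s < 2 m`. Hence
`∑ j, w_j cos (2 k t_j) = m` for `k < m`. Since `sin² t cos (2 k t)` is a combination of
`cos (2 (k - 1) t)`, `cos (2 k t)` and `cos (2 (k + 1) t)` with coefficients summing to zero,
induction on `i` gives `∑ j, w_j sin (t_j) ^ (2 i) cos (2 k t_j) = m δ_{i,0}` whenever
`i + |k| < m`; the case `k = 0` is the theorem.
-/

open Real Finset

theorem sin_mul_mul_cot_mul_cos_mul {t : ℝ} (ht : sin t ≠ 0) (a b : ℝ) :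
    sin (a * t) * cot t * cos (b * t)
      = (sin ((a + b + 1) * t) / sin t + sin ((a + b - 1) * t) / sin t
          + sin ((a - b + 1) * t) / sin t + sin ((a - b - 1) * t) / sin t) / 4 := by
  rw [cot_eq_cos_div_sin, show (a + b + 1) * t = a * t + b * t + t by ring,
    show (a + b - 1) * t = a * t + b * t - t by ring,
    show (a - b + 1) * t = a * t - b * t + t by ring,
    show (a - b - 1) * t = a * t - b * t - t by ring]
  simp only [sin_add, sin_sub]
  field_simp
  ring

theorem sin_sq_mul_cos_two_mul (k t : ℝ) :
    sin t ^ 2 * cos (2 * k * t)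
      = cos (2 * k * t) / 2 - cos (2 * (k + 1) * t) / 4 - cos (2 * (k - 1) * t) / 4 := by
  have h := cos_add_cos (2 * (k + 1) * t) (2 * (k - 1) * t)
  rw [show (2 * (k + 1) * t + 2 * (k - 1) * t) / 2 = 2 * k * t by ring,
    show (2 * (k + 1) * t - 2 * (k - 1) * t) / 2 = 2 * t by ring, cos_two_mul_eq_one_sub] at h
  linear_combination h / 4

noncomputable def chebyshevAngle (m j : ℕ) : ℝ := π * (2 * j + 1) / (4 * m)

noncomputable def chebyshevWeight (m j : ℕ) : ℝ := (-1) ^ j * cot (chebyshevAngle m j)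

section

variable {m j : ℕ}

theorem sin_chebyshevAngle_pos (hj : j < m) : 0 < sin (chebyshevAngle m j) := by
  have hjm : (j : ℝ) + 1 ≤ m := by exact_mod_cast hj
  have hm : (0 : ℝ) < m := by linarith
  apply Real.sin_pos_of_pos_of_lt_pi
  · unfold chebyshevAngle; positivity
  · rw [chebyshevAngle, div_lt_iff₀ (by positivity)]
    nlinarith [pi_pos]

theorem sin_two_mul_mul_chebyshevAngle (hm : m ≠ 0) :
    sin (2 * m * chebyshevAngle m j) = (-1) ^ j := by
  have : 2 * m * chebyshevAngle m j = j * π + π / 2 := by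
    unfold chebyshevAngle; field_simp; ring
  rw [this, sin_add_pi_div_two, cos_nat_mul_pi]

theorem sum_cos_two_mul_mul_chebyshevAngle {s : ℕ} (hs : 0 < s) (hsm : s < 2 * m) :
    ∑ j ∈ range m, cos (2 * s * chebyshevAngle m j) = 0 := by
  obtain ⟨α, hα⟩ : ∃ α : ℝ, α = s * π / (2 * m) := ⟨_, rfl⟩
  have hm : (0 : ℝ) < m := by exact_mod_cast (show 0 < m by omega)
  have hsinα : sin α ≠ 0 := by
    have hs' : (s : ℝ) < 2 * m := by exact_mod_cast hsm
    refine (Real.sin_pos_of_pos_of_lt_pi (by rw [hα]; positivity) ?_).ne'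
    rw [hα, div_lt_iff₀ (by positivity)]
    nlinarith [pi_pos]
  have hangle : ∀ j : ℕ, 2 * s * chebyshevAngle m j = (2 * j + 1) * α := by
    intro j
    rw [hα, chebyshevAngle]
    field_simp
    ring
  have htelescope : ∀ j : ℕ, sin (2 * (j + 1 : ℕ) * α) - sin (2 * j * α)
      = 2 * sin α * cos (2 * s * chebyshevAngle m j) := by
    intro j
    rw [sin_sub_sin, hangle]
    congr 3 <;> push_cast <;> ring
  have hsum := sum_range_sub (fun j : ℕ => sin (2 * j * α)) m
  have hend : sin (2 * m * α) = 0 := by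
    rw [show 2 * m * α = s * π by rw [hα]; field_simp, sin_nat_mul_pi]
  simp only [htelescope, ← mul_sum, hend, Nat.cast_zero, mul_zero, zero_mul, sin_zero,
    sub_zero] at hsum
  exact (mul_eq_zero.mp hsum).resolve_left (mul_ne_zero two_ne_zero hsinα)

theorem sum_sin_odd_mul_chebyshevAngle_div_sin {r : ℕ} (hr : r < 2 * m) :
    ∑ j ∈ range m, sin ((2 * r + 1) * chebyshevAngle m j) / sin (chebyshevAngle m j) = m := by
  induction r with
  | zero =>
    simp +contextual [div_self (sin_chebyshevAngle_pos (mem_range.mp _)).ne']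
  | succ r ih =>
    have hkernel : ∀ j ∈ range m,
        sin ((2 * (r + 1 : ℕ) + 1) * chebyshevAngle m j) / sin (chebyshevAngle m j)
          = sin ((2 * r + 1) * chebyshevAngle m j) / sin (chebyshevAngle m j)
            + 2 * cos (2 * (r + 1 : ℕ) * chebyshevAngle m j) := by
      intro j hj
      have hsin := (sin_chebyshevAngle_pos (mem_range.mp hj)).ne'
      set t := chebyshevAngle m j
      have h := sin_sub_sin ((2 * (r + 1 : ℕ) + 1) * t) ((2 * r + 1) * t)
      rw [show ((2 * (r + 1 : ℕ) + 1) * t - (2 * r + 1) * t) / 2 = t by push_cast; ring,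
        show ((2 * (r + 1 : ℕ) + 1) * t + (2 * r + 1) * t) / 2 = 2 * (r + 1 : ℕ) * t by
          push_cast; ring] at h
      rw [← sub_eq_iff_eq_add', ← sub_div, h]
      field_simp
    rw [sum_congr rfl hkernel, sum_add_distrib, ← mul_sum,
      sum_cos_two_mul_mul_chebyshevAngle r.succ_pos hr, ih (by omega), mul_zero, add_zero]

theorem sum_chebyshevWeight_mul_cos {k : ℕ} (hk : k < m) :
    ∑ j ∈ range m, chebyshevWeight m j * cos (2 * k * chebyshevAngle m j) = m := by
  obtain ⟨n, rfl⟩ := Nat.exists_eq_add_of_lt hk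
  let D (r j : ℕ) : ℝ :=
    sin ((2 * r + 1) * chebyshevAngle (k + n + 1) j) / sin (chebyshevAngle (k + n + 1) j)
  have hexpand : ∀ j ∈ range (k + n + 1),
      chebyshevWeight (k + n + 1) j * cos (2 * k * chebyshevAngle (k + n + 1) j)
        = (D (2 * k + n + 1) j + D (2 * k + n) j + D (n + 1) j + D n j) / 4 := by
    intro j hj
    rw [chebyshevWeight, ← sin_two_mul_mul_chebyshevAngle (m := k + n + 1) (by omega),
      sin_mul_mul_cot_mul_cos_mul (sin_chebyshevAngle_pos (mem_range.mp hj)).ne']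
    simp only [D]
    push_cast
    ring_nf
  rw [sum_congr rfl hexpand, ← sum_div, sum_add_distrib, sum_add_distrib, sum_add_distrib]
  simp only [D]
  rw [sum_sin_odd_mul_chebyshevAngle_div_sin (by omega),
    sum_sin_odd_mul_chebyshevAngle_div_sin (by omega),
    sum_sin_odd_mul_chebyshevAngle_div_sin (by omega),
    sum_sin_odd_mul_chebyshevAngle_div_sin (by omega)]
  ring

theorem sum_chebyshevWeight_mul_cos_intCast {k : ℤ} (hk : k.natAbs < m) :
    ∑ j ∈ range m, chebyshevWeight m j * cos (2 * k * chebyshevAngle m j) = m := by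
  rcases Int.natAbs_eq k with hk' | hk' <;> rw [hk']
  · exact_mod_cast sum_chebyshevWeight_mul_cos hk
  · simpa only [Int.cast_neg, Int.cast_natCast, mul_neg, neg_mul, cos_neg]
      using sum_chebyshevWeight_mul_cos hk

theorem sum_chebyshevWeight_mul_sin_pow_mul_cos (i : ℕ) {k : ℤ} (hik : i + k.natAbs < m) :
    ∑ j ∈ range m, chebyshevWeight m j
        * (sin (chebyshevAngle m j) ^ (2 * i) * cos (2 * k * chebyshevAngle m j))
      = if i = 0 then (m : ℝ) else 0 := by
  induction i generalizing k with
  | zero => simpa using sum_chebyshevWeight_mul_cos_intCast (by omega)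
  | succ i ih =>
    have hsplit : ∀ j ∈ range m, chebyshevWeight m j
          * (sin (chebyshevAngle m j) ^ (2 * (i + 1)) * cos (2 * k * chebyshevAngle m j))
        = chebyshevWeight m j
            * (sin (chebyshevAngle m j) ^ (2 * i) * cos (2 * k * chebyshevAngle m j)) / 2
          - chebyshevWeight m j * (sin (chebyshevAngle m j) ^ (2 * i)
              * cos (2 * (k + 1 : ℤ) * chebyshevAngle m j)) / 4
          - chebyshevWeight m j * (sin (chebyshevAngle m j) ^ (2 * i)
              * cos (2 * (k - 1 : ℤ) * chebyshevAngle m j)) / 4 := by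
      intro j _
      rw [mul_add, pow_add, mul_assoc, sin_sq_mul_cos_two_mul]
      push_cast
      ring
    rw [sum_congr rfl hsplit, sum_sub_distrib, sum_sub_distrib,
      ← sum_div, ← sum_div, ← sum_div,
      ih (by omega), ih (by omega), ih (by omega)]
    simp only [Nat.add_one_ne_zero, if_false]
    ring

theorem sum_chebyshevWeight_mul_sin_pow {i : ℕ} (hi : i < m) :
    ∑ j ∈ range m, chebyshevWeight m j * sin (chebyshevAngle m j) ^ (2 * i)
      = if i = 0 then (m : ℝ) else 0 := by
  simpa using sum_chebyshevWeight_mul_sin_pow_mul_cos i (k := 0) (by omega)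

end

theorem chebyshev_multiproduct_coefficients (m : ℕ)
    (x a : Fin m → ℝ)
    (hx : ∀ j : Fin m,
      x j = Real.sin (Real.pi * (2 * (j : ℕ) + 1) / (4 * m)) ^ 2)
    (ha : ∀ j : Fin m,
      a j = ((-1 : ℝ) ^ (j : ℕ) / m) *
        (Real.cos (Real.pi * (2 * (j : ℕ) + 1) / (4 * m)) /
          Real.sin (Real.pi * (2 * (j : ℕ) + 1) / (4 * m)))) :
    ∀ i : Fin m, ∑ j, a j * (x j) ^ (i : ℕ) = if (i : ℕ) = 0 then 1 else 0 := by
  intro i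
  have hm : (m : ℝ) ≠ 0 := Nat.cast_ne_zero.mpr i.pos.ne'
  calc ∑ j, a j * x j ^ (i : ℕ)
      = (∑ j ∈ range m, chebyshevWeight m j * sin (chebyshevAngle m j) ^ (2 * (i : ℕ)))
          / m := by
        rw [sum_div, ← Fin.sum_univ_eq_sum_range]
        refine sum_congr rfl fun j _ => ?_
        rw [ha, hx, chebyshevWeight, chebyshevAngle, cot_eq_cos_div_sin, pow_mul]
        ring
    _ = if (i : ℕ) = 0 then 1 else 0 := by
        rw [sum_chebyshevWeight_mul_sin_pow i.isLt]
        split_ifs <;> simp [hm]
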